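/- arXiv:1403.7480 — 3 statements merged into one kernel-verified Lean document; each statement's English description precedes it below -/
import Mathlib

section
/- Let α be an algebraic number all of whose conjugates (the complex roots of its minimal polynomial, including α itself) have modulus 1. Then there is no set S ⊆ ℤ with Card(S) = |M_α(0)| and ℤ[α] = S[α]. Consequently, if the minimal cardinality of a finite set S ⊆ ℂ with ℤ[α] = S[α] equals |M_α(0)|, then any such minimal set is not contained in ℤ. -/
/-
Since `M` is primitive, `P(α) ↦ P(0) mod M(0)` is a well-defined map `ℤ[α] → ℤ/M(0)` whose kernel
is `α ℤ[α]`. Hence an integer digit set `S` with `|S| = |M(0)|` and `S[α] = ℤ[α]` is a complete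
residue system mod `M(0)`, and every `z ∈ ℤ[α]` is uniquely `s + α w` with `s ∈ S`, `w ∈ ℤ[α]`.
Let `T (s + α w) = w`; then `T (y + α w) = T y + w`. For an integer `q = ∑_{k ≤ n} s_k α^k`,
complex conjugation and `ᾱ = α⁻¹` give `α^n q = ∑_{k ≤ n} s_{n-k} α^k`, so
`s_0 = T^n (α^n q) = T^n 0 + q`. As `0` has a finite expansion, its `T`-orbit is periodic, so
every integer lies in the finite set `S - {T^n 0}`: a contradiction.
-/

open Polynomial

/-- `ℤ[α]`: the set of values `P(α)` for `P ∈ ℤ[x]`. -/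
def Zadj (α : ℂ) : Set ℂ := {z | ∃ P : ℤ[X], aeval α P = z}

/-- `F[α]`: the set of all sums `Σ_{j=0}^{n} f_j α^j` with `n ∈ ℕ` and `f_0, …, f_n ∈ F`. -/
def repSet (α : ℂ) (F : Set ℂ) : Set ℂ :=
  {z | ∃ (n : ℕ) (f : ℕ → ℂ), (∀ j ≤ n, f j ∈ F) ∧
    z = ∑ j ∈ Finset.range (n + 1), f j * α ^ j}

/-- `α ∈ 𝓕_N`: the minimal cardinality of a finite `S ⊆ ℂ` with `ℤ[α] = S[α]` equals `N`. -/
def memF (α : ℂ) (N : ℕ) : Prop :=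
  (∃ S : Finset ℂ, S.card = N ∧ repSet α ↑S = Zadj α) ∧
  ∀ S : Finset ℂ, repSet α ↑S = Zadj α → N ≤ S.card

/-- `M` is the minimal polynomial of `α` over `ℚ`, normalized to be a primitive polynomial
with integer coefficients. -/
def IsPrimMinPoly (α : ℂ) (M : ℤ[X]) : Prop :=
  M.IsPrimitive ∧ ∃ c : ℚ, c ≠ 0 ∧ M.map (Int.castRingHom ℚ) = C c * minpoly ℚ α

open ComplexConjugate

structure IsDigitSystem (A : Subring ℂ) (α : ℂ) (D : Set ℂ) : Prop where
  base_mem : α ∈ A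
  subset : D ⊆ A
  exists_eq_add_mul : ∀ z ∈ A, ∃ w ∈ A, ∃ s ∈ D, z = s + α * w
  digit_unique : ∀ s ∈ D, ∀ s' ∈ D, ∀ w ∈ A, ∀ w' ∈ A, s + α * w = s' + α * w' → s = s'

open Classical in
/-- `digitShift A α D (s + α * w) = w`; it is `0` off `D + α A`. -/
noncomputable def digitShift (A : Subring ℂ) (α : ℂ) (D : Set ℂ) (z : ℂ) : ℂ :=
  if h : ∃ w ∈ A, ∃ s ∈ D, z = s + α * w then h.choose else 0

theorem sum_range_succ_mul_pow {R : Type*} [CommSemiring R] (r : ℕ → R) (α : R) (n : ℕ) :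
    ∑ k ∈ Finset.range (n + 1), r k * α ^ k
      = r 0 + α * ∑ k ∈ Finset.range n, r (k + 1) * α ^ k := by
  rw [Finset.sum_range_succ', Finset.mul_sum, pow_zero, mul_one, add_comm]
  exact congrArg (r 0 + ·) (Finset.sum_congr rfl fun k _ => by ring)

theorem Subring.sum_mul_pow_mem {R : Type*} [CommRing R] {A : Subring R} {α : R} (hα : α ∈ A)
    {r : ℕ → R} {n : ℕ} (hr : ∀ k < n, r k ∈ A) : ∑ k ∈ Finset.range n, r k * α ^ k ∈ A :=
  sum_mem fun k hk => mul_mem (hr k (Finset.mem_range.mp hk)) (pow_mem hα k)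

theorem exists_eq_add_mul_of_mem_repSet {A : Subring ℂ} {α z : ℂ} {D : Set ℂ} (hα : α ∈ A)
    (hDA : D ⊆ A) (hz : z ∈ repSet α D) : ∃ w ∈ A, ∃ s ∈ D, z = s + α * w := by
  obtain ⟨n, f, hf, rfl⟩ := hz
  exact ⟨_, A.sum_mul_pow_mem hα fun k hk => hDA (hf _ hk), f 0, hf 0 n.zero_le,
    sum_range_succ_mul_pow f α n⟩

namespace IsDigitSystem

variable {A : Subring ℂ} {α : ℂ} {D : Set ℂ}

theorem digitShift_spec (hD : IsDigitSystem A α D) {z : ℂ} (hz : z ∈ A) :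
    digitShift A α D z ∈ A ∧ ∃ s ∈ D, z = s + α * digitShift A α D z := by
  have h := hD.exists_eq_add_mul z hz
  rw [digitShift, dif_pos h]
  exact h.choose_spec

theorem iterate_digitShift_mem (hD : IsDigitSystem A α D) {z : ℂ} (hz : z ∈ A) (n : ℕ) :
    (digitShift A α D)^[n] z ∈ A := by
  induction n with
  | zero => exact hz
  | succ n ih => rw [Function.iterate_succ_apply']; exact (hD.digitShift_spec ih).1

theorem digitShift_digit_add_mul (hD : IsDigitSystem A α D) (hα : α ≠ 0) {s w : ℂ} (hs : s ∈ D)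
    (hw : w ∈ A) : digitShift A α D (s + α * w) = w := by
  have h : ∃ w' ∈ A, ∃ s' ∈ D, s + α * w = s' + α * w' := ⟨w, hw, s, hs, rfl⟩
  rw [digitShift, dif_pos h]
  obtain ⟨hw', s', hs', heq⟩ := h.choose_spec
  obtain rfl := hD.digit_unique s hs s' hs' w hw _ hw' heq
  exact (mul_left_cancel₀ hα (add_left_cancel heq)).symm

theorem digitShift_add_mul (hD : IsDigitSystem A α D) (hα : α ≠ 0) {y w : ℂ} (hy : y ∈ A)
    (hw : w ∈ A) : digitShift A α D (y + α * w) = digitShift A α D y + w := by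
  obtain ⟨hTy, s, hs, hy_eq⟩ := hD.digitShift_spec hy
  calc digitShift A α D (y + α * w)
      = digitShift A α D (s + α * (digitShift A α D y + w)) := by
        rw [mul_add, ← add_assoc, ← hy_eq]
    _ = digitShift A α D y + w := hD.digitShift_digit_add_mul hα hs (add_mem hTy hw)

theorem iterate_digitShift_add_pow_mul (hD : IsDigitSystem A α D) (hα : α ≠ 0) {y w : ℂ}
    (hy : y ∈ A) (hw : w ∈ A) {i m : ℕ} (him : i ≤ m) :
    (digitShift A α D)^[i] (y + α ^ m * w) = (digitShift A α D)^[i] y + α ^ (m - i) * w := by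
  induction i with
  | zero => rfl
  | succ i ih =>
    obtain ⟨k, hk⟩ : ∃ k, m - i = k + 1 := ⟨m - i - 1, by omega⟩
    have hpow : α ^ (m - i) * w = α * (α ^ (m - (i + 1)) * w) := by
      rw [hk, show m - (i + 1) = k by omega, pow_succ']; ring
    rw [Function.iterate_succ_apply', Function.iterate_succ_apply', ih (by omega), hpow,
      hD.digitShift_add_mul hα (hD.iterate_digitShift_mem hy i)
        (mul_mem (pow_mem hD.base_mem _) hw)]

theorem digitShift_sum_range_succ (hD : IsDigitSystem A α D) (hα : α ≠ 0) {r : ℕ → ℂ} {n : ℕ}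
    (hr : ∀ k < n + 1, r k ∈ D) :
    digitShift A α D (∑ k ∈ Finset.range (n + 1), r k * α ^ k)
      = ∑ k ∈ Finset.range n, r (k + 1) * α ^ k := by
  rw [sum_range_succ_mul_pow]
  exact hD.digitShift_digit_add_mul hα (hr 0 n.succ_pos)
    (A.sum_mul_pow_mem hD.base_mem fun k hk => hD.subset (hr _ (by omega)))

theorem iterate_digitShift_sum (hD : IsDigitSystem A α D) (hα : α ≠ 0) {r : ℕ → ℂ} {n m : ℕ}
    (hr : ∀ k < n + m, r k ∈ D) :
    (digitShift A α D)^[n] (∑ k ∈ Finset.range (n + m), r k * α ^ k)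
      = ∑ k ∈ Finset.range m, r (n + k) * α ^ k := by
  induction n generalizing r with
  | zero => simp
  | succ n ih =>
    rw [Function.iterate_succ_apply, show n + 1 + m = n + m + 1 by omega,
      hD.digitShift_sum_range_succ hα fun k hk => hr k (by omega),
      ih fun k hk => hr _ (by omega)]
    simp only [Nat.add_right_comm n 1]

theorem finite_range_iterate_digitShift_zero (hD : IsDigitSystem A α D) (hα : α ≠ 0)
    (h0 : (0 : ℂ) ∈ repSet α D) : (Set.range fun m => (digitShift A α D)^[m] 0).Finite := by
  obtain ⟨n, f, hf, h0⟩ := h0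
  have hper : Function.IsPeriodicPt (digitShift A α D) (n + 1) 0 := by
    have h := hD.iterate_digitShift_sum hα (r := f) (n := n + 1) (m := 0)
      fun k hk => hf k (by omega)
    rwa [Nat.add_zero, ← h0, Finset.sum_range_zero] at h
  refine (Set.finite_range fun k : Fin (n + 1) => (digitShift A α D)^[k] 0).subset ?_
  rintro _ ⟨m, rfl⟩
  exact ⟨⟨m % (n + 1), Nat.mod_lt _ n.succ_pos⟩, hper.iterate_mod_apply m⟩

end IsDigitSystem

theorem pow_mul_eq_sum_reverse {α x : ℂ} (hα : ‖α‖ = 1) {r : ℕ → ℂ} {n : ℕ}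
    (hx : conj x = x) (hr : ∀ k ≤ n, conj (r k) = r k)
    (h : x = ∑ k ∈ Finset.range (n + 1), r k * α ^ k) :
    α ^ n * x = ∑ k ∈ Finset.range (n + 1), r (n - k) * α ^ k := by
  have hα0 : α ≠ 0 := norm_ne_zero_iff.mp (by rw [hα]; exact one_ne_zero)
  have hx' : x = ∑ k ∈ Finset.range (n + 1), r k * α⁻¹ ^ k := by
    conv_lhs => rw [← hx, h]
    simp only [map_sum, map_mul, map_pow, ← Complex.inv_eq_conj hα]
    exact Finset.sum_congr rfl fun k hk => by
      rw [hr k (Nat.lt_succ_iff.mp (Finset.mem_range.mp hk))]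
  rw [← Finset.sum_range_reflect, hx', Finset.mul_sum]
  refine Finset.sum_congr rfl fun k hk => ?_
  have hkn : k ≤ n := Nat.lt_succ_iff.mp (Finset.mem_range.mp hk)
  rw [Nat.add_sub_cancel, Nat.sub_sub_self hkn, inv_pow,
    show α ^ n = α ^ (n - k) * α ^ k by rw [← pow_add, Nat.sub_add_cancel hkn]]
  field_simp

theorem IsDigitSystem.finite_setOf_conj_eq {A : Subring ℂ} {α : ℂ} {D : Set ℂ}
    (hD : IsDigitSystem A α D) (hα : ‖α‖ = 1) (hD_conj : ∀ s ∈ D, conj s = s) (hD_fin : D.Finite)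
    (hrep : (A : Set ℂ) ⊆ repSet α D) : {x ∈ (A : Set ℂ) | conj x = x}.Finite := by
  have hα0 : α ≠ 0 := norm_ne_zero_iff.mp (by rw [hα]; exact one_ne_zero)
  set T := digitShift A α D
  have horbit := hD.finite_range_iterate_digitShift_zero hα0 (hrep (zero_mem A))
  refine (hD_fin.image2 (· - ·) horbit).subset ?_
  rintro x ⟨hxA, hx⟩
  obtain ⟨n, f, hf, hx_sum⟩ := hrep hxA
  have hrev := pow_mul_eq_sum_reverse hα hx (fun k hk => hD_conj _ (hf k hk)) hx_sum
  have hlead : T^[n] (α ^ n * x) = f 0 := by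
    have h := hD.iterate_digitShift_sum hα0 (r := fun k => f (n - k)) (n := n) (m := 1)
      fun k hk => hf _ (Nat.sub_le n k)
    rwa [← hrev, Finset.sum_range_one, pow_zero, mul_one, Nat.add_zero, Nat.sub_self] at h
  have hshift : T^[n] (α ^ n * x) = T^[n] 0 + x := by
    simpa using hD.iterate_digitShift_add_pow_mul hα0 (zero_mem A) hxA le_rfl
  exact ⟨f 0, hf 0 n.zero_le, T^[n] 0, ⟨n, rfl⟩, by rw [← hlead, hshift]; ring⟩

theorem Int.eq_of_dvd_sub_of_card_eq_natAbs {a : ℤ} {S : Finset ℤ} (hcard : S.card = a.natAbs)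
    (hsurj : ∀ t : ℤ, ∃ s ∈ S, a ∣ t - s) {s s' : ℤ} (hs : s ∈ S) (hs' : s' ∈ S)
    (h : a ∣ s - s') : s = s' := by
  have ha : a.natAbs ≠ 0 := by
    obtain ⟨s₀, hs₀, -⟩ := hsurj 0
    rw [← hcard]
    exact (Finset.card_pos.mpr ⟨s₀, hs₀⟩).ne'
  have : NeZero a.natAbs := ⟨ha⟩
  have hcast : ∀ x y : ℤ, (x : ZMod a.natAbs) = y ↔ a ∣ y - x := fun x y => by
    rw [ZMod.intCast_eq_intCast_iff_dvd_sub, Int.natAbs_dvd]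
  have himage : S.image (Int.cast : ℤ → ZMod a.natAbs) = Finset.univ := by
    refine Finset.eq_univ_of_forall fun x => ?_
    obtain ⟨t, rfl⟩ := ZMod.intCast_surjective x
    obtain ⟨s, hs, hst⟩ := hsurj t
    exact Finset.mem_image.mpr ⟨s, hs, (hcast s t).mpr hst⟩
  have hinj : Set.InjOn (Int.cast : ℤ → ZMod a.natAbs) S := by
    rw [← Finset.card_image_iff, himage, Finset.card_univ, ZMod.card, hcard]
  exact hinj hs hs' ((hcast s s').mpr (dvd_sub_comm.mp h))

noncomputable def zadjSubring (α : ℂ) : Subring ℂ := (aeval α : ℤ[X] →ₐ[ℤ] ℂ).range.toSubring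

theorem self_mem_zadjSubring (α : ℂ) : α ∈ zadjSubring α := ⟨X, aeval_X α⟩

theorem intCast_image_subset_zadjSubring (α : ℂ) (S : Set ℤ) :
    (Int.cast '' S : Set ℂ) ⊆ zadjSubring α :=
  Set.image_subset_iff.mpr fun m _ => intCast_mem (zadjSubring α) m

theorem aeval_eq_coeff_zero_add_mul_aeval_divX (α : ℂ) (W : ℤ[X]) :
    aeval α W = W.coeff 0 + α * aeval α W.divX := by
  conv_lhs => rw [← W.divX_mul_X_add]
  rw [map_add, map_mul, aeval_X, aeval_C, algebraMap_int_eq, eq_intCast]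
  ring

namespace IsPrimMinPoly

variable {α : ℂ} {M : ℤ[X]}

theorem aeval_eq_zero (hM : IsPrimMinPoly α M) : aeval α M = 0 := by
  obtain ⟨-, c, -, hmap⟩ := hM
  rw [← aeval_map_algebraMap ℚ]
  change aeval α (M.map (Int.castRingHom ℚ)) = 0
  rw [hmap, map_mul, minpoly.aeval, mul_zero]

theorem dvd_of_aeval_eq_zero (hM : IsPrimMinPoly α M) {W : ℤ[X]} (hW : aeval α W = 0) :
    M ∣ W := by
  obtain ⟨hprim, c, hc, hmap⟩ := hM
  refine hprim.dvd_of_fraction_map_dvd_fraction_map (K := ℚ) ?_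
  change M.map (Int.castRingHom ℚ) ∣ _
  rw [hmap, (isUnit_C.mpr hc.isUnit).mul_left_dvd]
  exact minpoly.dvd ℚ α (by rwa [aeval_map_algebraMap])

theorem dvd_eval_zero_iff (hM : IsPrimMinPoly α M) (m : ℤ) :
    M.eval 0 ∣ m ↔ ∃ w ∈ Zadj α, (m : ℂ) = α * w := by
  constructor
  · rintro ⟨k, rfl⟩
    refine ⟨aeval α (-(C k * M.divX)), ⟨_, rfl⟩, ?_⟩
    have h := aeval_eq_coeff_zero_add_mul_aeval_divX α M
    rw [hM.aeval_eq_zero, coeff_zero_eq_eval_zero] at h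
    simp only [map_neg, map_mul, eq_intCast, map_intCast, Int.cast_mul]
    linear_combination -(k : ℂ) * h
  · rintro ⟨_, ⟨V, rfl⟩, hm⟩
    have hdvd := eval_dvd (x := 0) (hM.dvd_of_aeval_eq_zero (W := C m - X * V) (by simp [hm]))
    simpa using hdvd

theorem isDigitSystem {S : Finset ℤ} (hM : IsPrimMinPoly α M)
    (hcard : S.card = (M.eval 0).natAbs)
    (hsurj : ∀ t : ℤ, ∃ s ∈ S, M.eval 0 ∣ t - s) :
    IsDigitSystem (zadjSubring α) α (Int.cast '' S) where
  base_mem := self_mem_zadjSubring α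
  subset := intCast_image_subset_zadjSubring α S
  exists_eq_add_mul := by
    rintro _ ⟨W, rfl⟩
    obtain ⟨s, hs, hdvd⟩ := hsurj (W.coeff 0)
    obtain ⟨w, hw, hw_eq⟩ := (hM.dvd_eval_zero_iff _).mp hdvd
    refine ⟨w + aeval α W.divX, add_mem hw ⟨_, rfl⟩, s, ⟨s, hs, rfl⟩, ?_⟩
    change aeval α W = _
    push_cast at hw_eq
    linear_combination aeval_eq_coeff_zero_add_mul_aeval_divX α W + hw_eq
  digit_unique := by
    rintro _ ⟨s, hs, rfl⟩ _ ⟨s', hs', rfl⟩ w hw w' hw' h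
    refine congrArg _ (Int.eq_of_dvd_sub_of_card_eq_natAbs hcard hsurj hs hs' ?_)
    refine (hM.dvd_eval_zero_iff _).mpr ⟨w' - w, sub_mem hw' hw, ?_⟩
    push_cast
    linear_combination h

theorem exists_dvd_sub_of_subset_repSet {S : Finset ℤ} (hM : IsPrimMinPoly α M)
    (hrep : Zadj α ⊆ repSet α (Int.cast '' S)) (t : ℤ) : ∃ s ∈ S, M.eval 0 ∣ t - s := by
  have ht : (t : ℂ) ∈ zadjSubring α := intCast_mem _ t
  obtain ⟨w, hw, _, ⟨s, hs, rfl⟩, ht⟩ := exists_eq_add_mul_of_mem_repSet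
    (self_mem_zadjSubring α) (intCast_image_subset_zadjSubring α S) (hrep ht)
  exact ⟨s, hs, (hM.dvd_eval_zero_iff _).mpr ⟨w, hw, by push_cast; linear_combination ht⟩⟩

theorem not_exists_int_digit_set (hM : IsPrimMinPoly α M) (hα : ‖α‖ = 1) :
    ¬ ∃ S : Finset ℤ, S.card = (M.eval 0).natAbs ∧
      repSet α ((fun m : ℤ => (m : ℂ)) '' ↑S) = Zadj α := by
  rintro ⟨S, hcard, hrep⟩
  have hD := hM.isDigitSystem hcard (hM.exists_dvd_sub_of_subset_repSet hrep.ge)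
  have hfin := hD.finite_setOf_conj_eq hα (by rintro _ ⟨s, -, rfl⟩; exact map_intCast _ s)
    (S.finite_toSet.image _) hrep.ge
  refine Set.infinite_range_of_injective (Int.cast_injective (α := ℂ)) (hfin.subset ?_)
  rintro _ ⟨m, rfl⟩
  exact ⟨intCast_mem _ m, map_intCast _ m⟩

end IsPrimMinPoly

theorem no_integer_digit_set_of_conjugates_modulus_one_general (α : ℂ)
    (M : ℤ[X]) (hM : IsPrimMinPoly α M)
    (hconj : ∀ z : ℂ, aeval z M = 0 → ‖z‖ = 1) :
    (¬ ∃ S : Finset ℤ, S.card = (M.eval 0).natAbs ∧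
        repSet α ((fun m : ℤ => (m : ℂ)) '' ↑S) = Zadj α) ∧
    (memF α (M.eval 0).natAbs →
      ∀ S : Finset ℂ, S.card = (M.eval 0).natAbs → repSet α ↑S = Zadj α →
        ¬ (↑S : Set ℂ) ⊆ Set.range (fun m : ℤ => (m : ℂ))) := by
  have hno := hM.not_exists_int_digit_set (hconj α hM.aeval_eq_zero)
  refine ⟨hno, fun _ S hcard hrep hsub => hno ?_⟩
  classical
  rw [← Set.image_univ, Finset.subset_set_image_iff] at hsub
  obtain ⟨T, -, rfl⟩ := hsub
  refine ⟨T, ?_, by rwa [Finset.coe_image] at hrep⟩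
  rwa [Finset.card_image_of_injective _ Int.cast_injective] at hcard

/-- Let `α` be an algebraic number all of whose conjugates have modulus `1`.  Then there
is no set `S ⊆ ℤ` with `Card(S) = |M_α(0)|` and `ℤ[α] = S[α]`; consequently if the minimal
cardinality of a finite `S ⊆ ℂ` with `ℤ[α] = S[α]` equals `|M_α(0)|`, any such minimal set
is not contained in `ℤ`. -/
theorem no_integer_digit_set_of_conjugates_modulus_one (α : ℂ) (hα : IsAlgebraic ℚ α)
    (M : ℤ[X]) (hM : IsPrimMinPoly α M)
    (hconj : ∀ z : ℂ, aeval z M = 0 → ‖z‖ = 1) :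
    (¬ ∃ S : Finset ℤ, S.card = (M.eval 0).natAbs ∧
        repSet α ((fun m : ℤ => (m : ℂ)) '' ↑S) = Zadj α) ∧
    (memF α (M.eval 0).natAbs →
      ∀ S : Finset ℂ, S.card = (M.eval 0).natAbs → repSet α ↑S = Zadj α →
        ¬ (↑S : Set ℂ) ⊆ Set.range (fun m : ℤ => (m : ℂ))) :=
  no_integer_digit_set_of_conjugates_modulus_one_general α M hM hconj
end

section
/- Let α be a nonzero algebraic number, R a complete residue system mod α in ℤ[α], and J the associated backward division map. Then the following are equivalent: (i) ℤ[α] = R[α]; (ii) ℘ = {J^{(n)}(0) : n ≥ 0} and for every β ∈ ℤ[α] there exists s ∈ ℕ with J^{(s+1)}(β) = 0; (iii) ℘ = {J^{(n)}(0) : n ≥ 0} and for every β ∈ ℤ[α] the sequence (J^{(n)}(β))_{n≥0} is eventually periodic. -/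
/-
A complete residue system `R` turns `J` into a digit map: `β = r₀ + r₁ α + ⋯ + rₙ₋₁ αⁿ⁻¹ + αⁿ J⁽ⁿ⁾(β)`
with digits `rⱼ ∈ R`, and by uniqueness of the residue `J` shifts any `R`-expansion one digit to the
right. Hence `ℤ[α] = R[α]` says exactly that every orbit of `J` on `ℤ[α]` hits `0` after at least one
step. Everything else is dynamics of a self-map `f` of a set `S` with a base point `x₀`: if every
orbit passes through `x₀` (after `≥ 1` steps), the periodic points are exactly the orbit of `x₀`;
conversely, if the periodic points form the orbit of `x₀` and every orbit is eventually periodic,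
every orbit passes through `x₀`.
-/

open Polynomial

/-- `R` is a complete residue system mod `α` in `ℤ[α]`: `R ⊆ ℤ[α]` and every `β ∈ ℤ[α]`
is congruent modulo the ideal `αℤ[α]` to exactly one element of `R`. -/
def IsCRS (α : ℂ) (R : Set ℂ) : Prop :=
  R ⊆ Zadj α ∧ ∀ β ∈ Zadj α, ∃! r, r ∈ R ∧ ∃ γ ∈ Zadj α, β - r = α * γ

/-- `J` is the backward division map associated to the CRS `R`:
for every `β ∈ ℤ[α]`, `J β ∈ ℤ[α]` and `β = r + α · J β` for some `r ∈ R`. -/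
def IsJmap (α : ℂ) (R : Set ℂ) (J : ℂ → ℂ) : Prop :=
  ∀ β ∈ Zadj α, J β ∈ Zadj α ∧ ∃ r ∈ R, β = r + α * J β

/-- `℘`: the set of periodic elements of `ℤ[α]` under `J`. -/
def perSet (α : ℂ) (J : ℂ → ℂ) : Set ℂ :=
  {β ∈ Zadj α | ∃ n : ℕ, 1 ≤ n ∧ J^[n] β = β}

/-- The orbit of `β` under `J` is eventually periodic. -/
def EvPeriodic (J : ℂ → ℂ) (β : ℂ) : Prop :=
  ∃ (k m : ℕ), 1 ≤ m ∧ J^[k + m] β = J^[k] β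

open Function Set

section Dynamics

variable {X : Type*} {f : X → X} {S : Set X} {x₀ x : X} {n : ℕ}

theorem Function.IsPeriodicPt.exists_iterate_succ_iterate_eq (hx : IsPeriodicPt f n x)
    (hn : 0 < n) (k : ℕ) : ∃ s, f^[s + 1] (f^[k] x) = x := by
  -- `n * (k + 1)` is a period of `x` exceeding `k`
  refine ⟨n * (k + 1) - k - 1, ?_⟩
  have hle : k + 1 ≤ n * (k + 1) := Nat.le_mul_of_pos_left _ hn
  rw [← iterate_add_apply, show n * (k + 1) - k - 1 + 1 + k = n * (k + 1) by omega]
  exact (hx.mul_const _).eq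

theorem inter_periodicPts_eq_range_of_forall_iterate_succ_eq (hS : MapsTo f S S)
    (hx₀ : x₀ ∈ S) (hreach : ∀ x ∈ S, ∃ s, f^[s + 1] x = x₀) :
    S ∩ periodicPts f = range (f^[·] x₀) := by
  ext x
  constructor
  · rintro ⟨hxS, hx⟩
    obtain ⟨n, hn, hxn⟩ := mem_periodicPts.1 hx
    obtain ⟨s, hs⟩ := hreach x hxS
    obtain ⟨m, hm⟩ := hxn.exists_iterate_succ_iterate_eq hn (s + 1)
    exact ⟨m + 1, by rwa [hs] at hm⟩
  · rintro ⟨n, rfl⟩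
    obtain ⟨s, hs⟩ := hreach x₀ hx₀
    exact ⟨hS.iterate n hx₀, mk_mem_periodicPts s.succ_pos (IsPeriodicPt.apply_iterate hs n)⟩

theorem exists_iterate_succ_eq_of_inter_periodicPts_eq_range (hS : MapsTo f S S)
    (hper : S ∩ periodicPts f = range (f^[·] x₀)) (hx : x ∈ S) {k : ℕ}
    (hk : f^[k] x ∈ periodicPts f) : ∃ s, f^[s + 1] x = x₀ := by
  obtain ⟨t, ht⟩ : f^[k] x ∈ range (f^[·] x₀) := hper ▸ ⟨hS.iterate k hx, hk⟩
  obtain ⟨n, hn, hx₀⟩ := mem_periodicPts.1 (hper.symm ▸ mem_range_self 0 : x₀ ∈ S ∩ _).2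
  obtain ⟨s, hs⟩ := hx₀.exists_iterate_succ_iterate_eq hn t
  refine ⟨s + k, ?_⟩
  rwa [show s + k + 1 = s + 1 + k by omega, iterate_add_apply, ← ht]

end Dynamics

theorem Zadj_eq_range_aeval (α : ℂ) : Zadj α = ((aeval α : ℤ[X] →ₐ[ℤ] ℂ).range : Set ℂ) :=
  Set.ext fun _ => (AlgHom.mem_range _).symm

theorem sum_mul_pow_mem_Zadj {α : ℂ} {R : Set ℂ} (hR : R ⊆ Zadj α) {n : ℕ} {f : ℕ → ℂ}
    (hf : ∀ j < n, f j ∈ R) : ∑ j ∈ Finset.range n, f j * α ^ j ∈ Zadj α := by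
  rw [Zadj_eq_range_aeval] at hR ⊢
  exact Subalgebra.sum_mem _ fun j hj =>
    mul_mem (hR (hf j (Finset.mem_range.1 hj))) (pow_mem ((AlgHom.mem_range _).2 ⟨X, aeval_X α⟩) j)

theorem repSet_subset_Zadj {α : ℂ} {R : Set ℂ} (hR : R ⊆ Zadj α) : repSet α R ⊆ Zadj α := by
  rintro z ⟨n, f, hf, rfl⟩
  exact sum_mul_pow_mem_Zadj hR fun j hj => hf j (Nat.lt_succ_iff.1 hj)

theorem perSet_eq_inter_periodicPts (α : ℂ) (J : ℂ → ℂ) :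
    perSet α J = Zadj α ∩ periodicPts J :=
  rfl

theorem evPeriodic_iff_exists_iterate_mem_periodicPts {J : ℂ → ℂ} {β : ℂ} :
    EvPeriodic J β ↔ ∃ k, J^[k] β ∈ periodicPts J := by
  simp only [EvPeriodic, mem_periodicPts, IsPeriodicPt, IsFixedPt, ← iterate_add_apply,
    gt_iff_lt, Nat.one_le_iff_ne_zero, Nat.pos_iff_ne_zero, add_comm]

namespace IsJmap

variable {α : ℂ} {R : Set ℂ} {J : ℂ → ℂ}

theorem mapsTo (hJ : IsJmap α R J) : MapsTo J (Zadj α) (Zadj α) :=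
  fun _ hβ => (hJ _ hβ).1

theorem exists_eq_sum_add_pow_mul_iterate (hJ : IsJmap α R J) {β : ℂ} (hβ : β ∈ Zadj α)
    (N : ℕ) : ∃ f : ℕ → ℂ, (∀ j, f j ∈ R) ∧
      β = ∑ j ∈ Finset.range N, f j * α ^ j + α ^ N * J^[N] β := by
  choose! r hrR hr using fun n => (hJ (J^[n] β) (hJ.mapsTo.iterate n hβ)).2
  refine ⟨r, hrR, ?_⟩
  induction N with
  | zero => simp
  | succ N ih =>
    have hN : J^[N] β = r N + α * J^[N + 1] β := by rw [iterate_succ_apply']; exact hr N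
    calc β = ∑ j ∈ Finset.range N, r j * α ^ j + α ^ N * J^[N] β := ih
      _ = _ := by rw [Finset.sum_range_succ, hN]; ring

theorem apply_sum_mul_pow (hJ : IsJmap α R J) (hR : IsCRS α R) (h0 : α ≠ 0) {n : ℕ}
    {f : ℕ → ℂ} (hf : ∀ j ≤ n, f j ∈ R) :
    J (∑ j ∈ Finset.range (n + 1), f j * α ^ j) = ∑ j ∈ Finset.range n, f (j + 1) * α ^ j := by
  have hβγ : ∑ j ∈ Finset.range (n + 1), f j * α ^ j =
      f 0 + α * ∑ j ∈ Finset.range n, f (j + 1) * α ^ j := by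
    rw [Finset.sum_range_succ', Finset.mul_sum, pow_zero, mul_one, add_comm]
    exact congrArg _ (Finset.sum_congr rfl fun _ _ => by ring)
  set β := ∑ j ∈ Finset.range (n + 1), f j * α ^ j
  set γ := ∑ j ∈ Finset.range n, f (j + 1) * α ^ j
  have hβ : β ∈ Zadj α := sum_mul_pow_mem_Zadj hR.1 fun j hj => hf j (Nat.lt_succ_iff.1 hj)
  have hγ : γ ∈ Zadj α := sum_mul_pow_mem_Zadj hR.1 fun j hj => hf (j + 1) hj
  obtain ⟨hJβ, r, hr, hβJ⟩ := hJ β hβ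
  have hr0 : r = f 0 := (hR.2 β hβ).unique ⟨hr, J β, hJβ, by linear_combination hβJ⟩
    ⟨hf 0 n.zero_le, γ, hγ, by linear_combination hβγ⟩
  exact mul_left_cancel₀ h0 (by linear_combination hβγ - hβJ - hr0)

theorem iterate_succ_sum_mul_pow (hJ : IsJmap α R J) (hR : IsCRS α R) (h0 : α ≠ 0) :
    ∀ {n : ℕ} {f : ℕ → ℂ}, (∀ j ≤ n, f j ∈ R) →
      J^[n + 1] (∑ j ∈ Finset.range (n + 1), f j * α ^ j) = 0
  | 0, f, hf => by simpa using hJ.apply_sum_mul_pow hR h0 hf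
  | n + 1, f, hf => by
    rw [iterate_succ_apply, hJ.apply_sum_mul_pow hR h0 hf]
    exact iterate_succ_sum_mul_pow hJ hR h0 fun j hj => hf (j + 1) (by omega)

theorem repSet_eq_Zadj_iff (hJ : IsJmap α R J) (hR : IsCRS α R) (h0 : α ≠ 0) :
    repSet α R = Zadj α ↔ ∀ β ∈ Zadj α, ∃ s, J^[s + 1] β = 0 := by
  refine ⟨fun hrep β hβ => ?_, fun hreach => (repSet_subset_Zadj hR.1).antisymm fun β hβ => ?_⟩
  · obtain ⟨n, f, hf, rfl⟩ := hrep ▸ hβ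
    exact ⟨n, hJ.iterate_succ_sum_mul_pow hR h0 hf⟩
  · obtain ⟨s, hs⟩ := hreach β hβ
    obtain ⟨f, hfR, hf⟩ := hJ.exists_eq_sum_add_pow_mul_iterate hβ (s + 1)
    exact ⟨s, f, fun j _ => hfR j, by rwa [hs, mul_zero, add_zero] at hf⟩

end IsJmap

theorem crs_representation_tfae_general (α : ℂ) (h0 : α ≠ 0)
    (R : Set ℂ) (hR : IsCRS α R) (J : ℂ → ℂ) (hJ : IsJmap α R J) :
    (repSet α R = Zadj α ↔
      (perSet α J = {β | ∃ n : ℕ, J^[n] 0 = β} ∧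
        ∀ β ∈ Zadj α, ∃ s : ℕ, J^[s + 1] β = 0)) ∧
    (repSet α R = Zadj α ↔
      (perSet α J = {β | ∃ n : ℕ, J^[n] 0 = β} ∧
        ∀ β ∈ Zadj α, EvPeriodic J β)) := by
  have h0Z : (0 : ℂ) ∈ Zadj α := ⟨0, map_zero _⟩
  have hper : (∀ β ∈ Zadj α, ∃ s, J^[s + 1] β = 0) →
      perSet α J = {β | ∃ n : ℕ, J^[n] 0 = β} := fun hreach => by
    rw [perSet_eq_inter_periodicPts]
    exact inter_periodicPts_eq_range_of_forall_iterate_succ_eq hJ.mapsTo h0Z hreach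
  have hev : (∀ β ∈ Zadj α, ∃ s, J^[s + 1] β = 0) → ∀ β ∈ Zadj α, EvPeriodic J β :=
    fun hreach β hβ => by
      obtain ⟨s, hs⟩ := hreach β hβ
      obtain ⟨t, ht⟩ := hreach 0 h0Z
      exact evPeriodic_iff_exists_iterate_mem_periodicPts.2
        ⟨s + 1, hs ▸ mk_mem_periodicPts t.succ_pos ht⟩
  have hback : perSet α J = {β | ∃ n : ℕ, J^[n] 0 = β} → (∀ β ∈ Zadj α, EvPeriodic J β) →
      ∀ β ∈ Zadj α, ∃ s, J^[s + 1] β = 0 := fun hP hE β hβ => by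
    rw [perSet_eq_inter_periodicPts] at hP
    obtain ⟨k, hk⟩ := evPeriodic_iff_exists_iterate_mem_periodicPts.1 (hE β hβ)
    exact exists_iterate_succ_eq_of_inter_periodicPts_eq_range hJ.mapsTo hP hβ hk
  rw [hJ.repSet_eq_Zadj_iff hR h0]
  exact ⟨⟨fun h => ⟨hper h, h⟩, And.right⟩,
    ⟨fun h => ⟨hper h, hev h⟩, fun h => hback h.1 h.2⟩⟩

/-- Proposition 1: for a nonzero algebraic number `α`, a CRS `R` and the associated map `J`,
the following are equivalent: (i) `ℤ[α] = R[α]`; (ii) `℘ = {J^{(n)}(0) : n ≥ 0}` and every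
`β ∈ ℤ[α]` has `J^{(s+1)}(β) = 0` for some `s`; (iii) `℘ = {J^{(n)}(0) : n ≥ 0}` and every
orbit is eventually periodic. -/
theorem crs_representation_tfae (α : ℂ) (hα : IsAlgebraic ℚ α) (h0 : α ≠ 0)
    (R : Set ℂ) (hR : IsCRS α R) (J : ℂ → ℂ) (hJ : IsJmap α R J) :
    (repSet α R = Zadj α ↔
      (perSet α J = {β | ∃ n : ℕ, J^[n] 0 = β} ∧
        ∀ β ∈ Zadj α, ∃ s : ℕ, J^[s + 1] β = 0)) ∧
    (repSet α R = Zadj α ↔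
      (perSet α J = {β | ∃ n : ℕ, J^[n] 0 = β} ∧
        ∀ β ∈ Zadj α, EvPeriodic J β)) :=
  crs_representation_tfae_general α h0 R hR J hJ
end

section
/- Let α be an expanding algebraic number (an algebraic number all of whose conjugates, including α itself, have modulus greater than 1), R a complete residue system mod α in ℤ[α], and J the associated backward division map. Then for every β ∈ ℤ[α], the sequence (J^{(n)}(β))_{n≥0} is eventually periodic. -/
open Polynomial

/-!
Writing `x n = J^[n] β`, the orbit obeys `x n = r n + α * x (n + 1)` with digits `r n ∈ R`, and `R`
is finite because `ℤ[α]/αℤ[α]` is a quotient of `ℤ` by a nonzero ideal. Read the recursion in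
`K = ℚ(α)`. At every complex embedding `|α| > 1`, so `x (n + 1) = (x n - r n) / α` keeps the
conjugates of the orbit bounded. At a finite place where `α` is integral all of `ℤ[α]` is integral,
and at the other places the same recursion does not increase the valuation; hence one denominator
clears the whole orbit. Integers of `K` with bounded conjugates form a finite set, so the orbit is
finite, hence eventually periodic.
-/

open IsDedekindDomain NumberField IntermediateField

theorem Valuation.map_le_of_eq_add_mul {R Γ₀ : Type*} [Ring R] [LinearOrderedCommGroupWithZero Γ₀]
    (v : Valuation R Γ₀) {a : R} {x r : ℕ → R} {γ : Γ₀} (ha : 1 ≤ v a)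
    (h : ∀ n, x n = r n + a * x (n + 1)) (hr : ∀ n, v (r n) ≤ γ) (hx : v (x 0) ≤ γ) :
    ∀ n, v (x n) ≤ γ := by
  intro n
  induction n with
  | zero => exact hx
  | succ n ih =>
    calc v (x (n + 1)) ≤ v a * v (x (n + 1)) := le_mul_of_one_le_left' ha
      _ = v (x n - r n) := by rw [← map_mul, h n, add_sub_cancel_left]
      _ ≤ γ := v.map_sub_le ih (hr n)

theorem norm_le_of_eq_add_mul {E : Type*} [NormedDivisionRing E] {c : E} {x r : ℕ → E}
    {C M : ℝ} (hc : c ≠ 0) (h : ∀ n, x n = r n + c * x (n + 1)) (hr : ∀ n, ‖r n‖ ≤ C)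
    (hM : C ≤ (‖c‖ - 1) * M) (hx : ‖x 0‖ ≤ M) : ∀ n, ‖x n‖ ≤ M := by
  intro n
  induction n with
  | zero => exact hx
  | succ n ih =>
    refine le_of_mul_le_mul_left ?_ (norm_pos_iff.2 hc)
    calc ‖c‖ * ‖x (n + 1)‖ = ‖x n - r n‖ := by rw [← norm_mul, h n, add_sub_cancel_left]
      _ ≤ ‖x n‖ + ‖r n‖ := norm_sub_le _ _
      _ ≤ ‖c‖ * M := by linarith [hr n]

theorem IsDedekindDomain.HeightOneSpectrum.valuation_le_one_of_mem_adjoin {R A K : Type*}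
    [CommRing R] [CommRing A] [IsDedekindDomain A] [Field K] [Algebra R A] [Algebra R K]
    [Algebra A K] [IsScalarTower R A K] [IsFractionRing A K] (v : HeightOneSpectrum A) {a z : K}
    (ha : v.valuation K a ≤ 1) (hz : z ∈ Algebra.adjoin R {a}) : v.valuation K z ≤ 1 := by
  induction hz using Algebra.adjoin_induction with
  | mem x hx => rwa [Set.mem_singleton_iff.1 hx]
  | algebraMap r => rw [IsScalarTower.algebraMap_apply R A K]; exact v.valuation_le_one _
  | add x y _ _ hx hy => exact (v.valuation K).map_add_le hx hy
  | mul x y _ _ hx hy => rw [map_mul]; exact mul_le_one' hx hy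

theorem exists_isInteger_smul_of_eq_add_mul {R A K : Type*} [CommRing R] [CommRing A]
    [IsDedekindDomain A] [Field K] [Algebra R A] [Algebra R K] [Algebra A K] [IsScalarTower R A K]
    [IsFractionRing A K] {a : K} {S : Set K} (hS : S.Finite)
    {x r : ℕ → K} (hr : ∀ n, r n ∈ S) (h : ∀ n, x n = r n + a * x (n + 1))
    (hx : ∀ n, x n ∈ Algebra.adjoin R {a}) :
    ∃ b ∈ nonZeroDivisors A, ∀ n, IsLocalization.IsInteger A (b • x n) := by
  classical
  obtain ⟨b, hb⟩ :=
    IsLocalization.exist_integer_multiples_of_finset (nonZeroDivisors A) (insert (x 0) hS.toFinset)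
  refine ⟨b, b.2, fun n => ?_⟩
  suffices hv : ∀ v : HeightOneSpectrum A, v.valuation K ((b : A) • x n) ≤ 1 by
    obtain ⟨y, hy⟩ := HeightOneSpectrum.mem_integers_of_valuation_le_one K _ hv
    exact ⟨y, hy⟩
  intro v
  have hb1 : ∀ z ∈ insert (x 0) hS.toFinset, v.valuation K ((b : A) • z) ≤ 1 := by
    rintro z hz
    obtain ⟨w, hw⟩ := hb z hz
    rw [← hw]
    exact v.valuation_le_one w
  rcases le_total (v.valuation K a) 1 with ha | ha
  · rw [Algebra.smul_def, map_mul]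
    exact mul_le_one' (v.valuation_le_one _) (v.valuation_le_one_of_mem_adjoin ha (hx n))
  · refine (v.valuation K).map_le_of_eq_add_mul ha (x := fun n => (b : A) • x n)
      (r := fun n => (b : A) • r n)
      (fun n => by simp only [h n, smul_add, mul_smul_comm]) (fun n => hb1 _ ?_)
      (hb1 _ (Finset.mem_insert_self _ _)) n
    exact Finset.mem_insert_of_mem (hS.mem_toFinset.2 (hr n))

theorem NumberField.exists_norm_embedding_le_of_eq_add_mul {K : Type*} [Field K] [NumberField K]
    {a : K} (ha : ∀ φ : K →+* ℂ, 1 < ‖φ a‖) {S : Set K} (hS : S.Finite) {x r : ℕ → K}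
    (hr : ∀ n, r n ∈ S) (h : ∀ n, x n = r n + a * x (n + 1)) :
    ∃ B, ∀ n (φ : K →+* ℂ), ‖φ (x n)‖ ≤ B := by
  have hφ : ∀ φ : K →+* ℂ, ∃ M, ∀ n, ‖φ (x n)‖ ≤ M := by
    intro φ
    obtain ⟨C, hC⟩ := (hS.image fun s => ‖φ s‖).bddAbove
    have hφa : 0 < ‖φ a‖ - 1 := sub_pos.2 (ha φ)
    refine ⟨max ‖φ (x 0)‖ (C / (‖φ a‖ - 1)), norm_le_of_eq_add_mul (c := φ a)
      (norm_pos_iff.1 (one_pos.trans (ha φ))) (fun n => by rw [h n, map_add, map_mul])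
      (fun n => hC ⟨r n, hr n, rfl⟩) ?_ (le_max_left _ _)⟩
    rw [← div_le_iff₀' hφa]
    exact le_max_right _ _
  choose M hM using hφ
  obtain ⟨B, hB⟩ := (Set.finite_range M).bddAbove
  exact ⟨B, fun n φ => (hM φ n).trans (hB ⟨φ, rfl⟩)⟩

theorem NumberField.finite_range_of_eq_add_mul {K : Type*} [Field K] [NumberField K]
    {a : K} (ha : ∀ φ : K →+* ℂ, 1 < ‖φ a‖) {S : Set K} (hS : S.Finite) {x r : ℕ → K}
    (hr : ∀ n, r n ∈ S) (h : ∀ n, x n = r n + a * x (n + 1))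
    (hx : ∀ n, x n ∈ Algebra.adjoin ℤ {a}) : (Set.range x).Finite := by
  obtain ⟨b, hb0, hb⟩ := exists_isInteger_smul_of_eq_add_mul (A := 𝓞 K) hS hr h hx
  set c : K := algebraMap (𝓞 K) K b
  have hc0 : c ≠ 0 := by simpa [c] using nonZeroDivisors.ne_zero hb0
  obtain ⟨B, hB⟩ := exists_norm_embedding_le_of_eq_add_mul ha (hS.image (c * ·))
    (fun n => ⟨r n, hr n, rfl⟩) (x := fun n => c * x n) fun n => by rw [h n]; ring
  have hcx : (Set.range fun n => c * x n).Finite := by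
    refine (Embeddings.finite_of_norm_le K ℂ B).subset (Set.range_subset_iff.2 fun n => ⟨?_, hB n⟩)
    obtain ⟨y, hy⟩ := hb n
    rw [← Algebra.smul_def, ← hy]
    exact RingOfIntegers.isIntegral_coe y
  rw [← Function.comp_def, Set.range_comp] at hcx
  exact hcx.of_finite_image (mul_right_injective₀ hc0).injOn

theorem mem_Zadj_iff {α z : ℂ} : z ∈ Zadj α ↔ z ∈ Algebra.adjoin ℤ {α} := by
  rw [Algebra.adjoin_singleton_eq_range_aeval, AlgHom.mem_range]; rfl

theorem exists_intCast_sub_eq_mul {α z : ℂ} (hz : z ∈ Zadj α) :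
    ∃ n : ℤ, ∃ γ ∈ Zadj α, z - n = α * γ := by
  obtain ⟨P, rfl⟩ := hz
  obtain ⟨Q, hQ⟩ := X_dvd_sub_C (p := P)
  refine ⟨P.coeff 0, aeval α Q, ⟨Q, rfl⟩, ?_⟩
  simpa using congrArg (aeval α) hQ

theorem IsCRS.eq_of_sub_eq_mul {α : ℂ} {R : Set ℂ} (hR : IsCRS α R) {r s γ : ℂ} (hr : r ∈ R)
    (hs : s ∈ R) (hγ : γ ∈ Zadj α) (h : r - s = α * γ) : r = s :=
  (hR.2 r (hR.1 hr)).unique ⟨hr, 0, mem_Zadj_iff.2 (zero_mem _), by simp⟩ ⟨hs, γ, hγ, h⟩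

theorem IsCRS.finite {α : ℂ} (hα : IsAlgebraic ℚ α) (hα0 : α ≠ 0) {R : Set ℂ}
    (hR : IsCRS α R) : R.Finite := by
  obtain ⟨t, ht, m, hm0, hmt⟩ := ((IsFractionRing.isAlgebraic_iff ℤ ℚ ℂ).2 hα)
    |>.exists_nonzero_eq_adjoin_mul (mem_nonZeroDivisors_of_ne_zero hα0)
  choose! n γ hγ hnγ using fun z (hz : z ∈ Zadj α) => exists_intCast_sub_eq_mul hz
  have : NeZero m.natAbs := ⟨Int.natAbs_ne_zero.2 hm0⟩
  -- `m ∈ αℤ[α]`, so the integer residue `n r` of `r` modulo `m` already determines `r`.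
  refine Set.Finite.of_finite_image (f := fun r => (n r : ZMod m.natAbs)) (Set.toFinite _) ?_
  intro r₁ h₁ r₂ h₂ h
  obtain ⟨k, hk⟩ := Int.natAbs_dvd.1 ((ZMod.intCast_eq_intCast_iff_dvd_sub _ _ _).1 h)
  refine (hR.eq_of_sub_eq_mul h₂ h₁ (γ := γ r₂ - γ r₁ + t * k) ?_ ?_).symm
  · exact mem_Zadj_iff.2 <| add_mem (sub_mem (mem_Zadj_iff.1 (hγ r₂ (hR.1 h₂)))
      (mem_Zadj_iff.1 (hγ r₁ (hR.1 h₁)))) (mul_mem ht (intCast_mem _ k))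
  · have hk' : (n r₂ : ℂ) - n r₁ = m * k := by exact_mod_cast hk
    simp only [algebraMap_int_eq, eq_intCast] at hmt
    linear_combination hnγ r₂ (hR.1 h₂) - hnγ r₁ (hR.1 h₁) + hk' - k * hmt

theorem IsJmap.iterate_mem {α : ℂ} {R : Set ℂ} {J : ℂ → ℂ} (hJ : IsJmap α R J) {β : ℂ}
    (hβ : β ∈ Zadj α) (n : ℕ) : J^[n] β ∈ Zadj α := by
  induction n with
  | zero => exact hβ
  | succ n ih => rw [Function.iterate_succ_apply']; exact (hJ _ ih).1

theorem evPeriodic_of_finite_range {J : ℂ → ℂ} {β : ℂ}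
    (h : (Set.range fun n => J^[n] β).Finite) : EvPeriodic J β := by
  obtain ⟨k, l, hkl, hJkl⟩ := h.exists_lt_map_eq_of_forall_mem (f := fun n => J^[n] β)
    Set.mem_range_self
  exact ⟨k, l - k, by omega, by rw [Nat.add_sub_cancel' hkl.le]; exact hJkl.symm⟩

theorem exists_mem_adjoin_gen_of_mem_Zadj {α z : ℂ} (hz : z ∈ Zadj α) :
    ∃ y ∈ Algebra.adjoin ℤ {AdjoinSimple.gen ℚ α}, (y : ℂ) = z := by
  obtain ⟨P, rfl⟩ := hz
  refine ⟨aeval (AdjoinSimple.gen ℚ α) P, aeval_mem_adjoin_singleton ℤ _, ?_⟩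
  rw [← AdjoinSimple.algebraMap_gen ℚ α, aeval_algebraMap_apply]
  rfl

theorem one_lt_norm_embedding_gen {α : ℂ} (hexp : ∀ z : ℂ, aeval z (minpoly ℚ α) = 0 → 1 < ‖z‖)
    (φ : ℚ⟮α⟯ →+* ℂ) : 1 < ‖φ (AdjoinSimple.gen ℚ α)‖ := by
  refine hexp _ ?_
  rw [← minpoly_gen]
  exact minpoly.aeval_algHom _ φ.toRatAlgHom _

/-- Corollary 2 (ii): for an expanding algebraic number `α`, a CRS `R` and the associated
map `J`, every orbit `(J^{(n)}(β))_{n≥0}` with `β ∈ ℤ[α]` is eventually periodic. -/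
theorem orbits_eventually_periodic (α : ℂ) (hα : IsAlgebraic ℚ α)
    (hexp : ∀ z : ℂ, aeval z (minpoly ℚ α) = 0 → 1 < ‖z‖)
    (R : Set ℂ) (hR : IsCRS α R) (J : ℂ → ℂ) (hJ : IsJmap α R J) :
    ∀ β ∈ Zadj α, EvPeriodic J β := by
  intro β hβ
  have hα0 : α ≠ 0 := norm_pos_iff.1 (one_pos.trans (hexp α (minpoly.aeval ℚ α)))
  have : FiniteDimensional ℚ ℚ⟮α⟯ := adjoin.finiteDimensional hα.isIntegral
  have : NumberField ℚ⟮α⟯ := ⟨⟩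
  set a := AdjoinSimple.gen ℚ α
  choose x hx hxβ using fun n => exists_mem_adjoin_gen_of_mem_Zadj (hJ.iterate_mem hβ n)
  have hdigit : ∀ n, ∃ s : ℚ⟮α⟯, (s : ℂ) ∈ R ∧ x n = s + a * x (n + 1) := by
    intro n
    obtain ⟨r, hr, hrJ⟩ := (hJ _ (hJ.iterate_mem hβ n)).2
    obtain ⟨s, -, rfl⟩ := exists_mem_adjoin_gen_of_mem_Zadj (hR.1 hr)
    refine ⟨s, hr, Subtype.ext ?_⟩
    push_cast
    rw [hxβ, hxβ, Function.iterate_succ_apply']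
    exact hrJ
  choose r hrR hr using hdigit
  have hfin := NumberField.finite_range_of_eq_add_mul (one_lt_norm_embedding_gen hexp)
    ((hR.finite hα hα0).preimage Subtype.val_injective.injOn) hrR hr hx
  refine evPeriodic_of_finite_range ?_
  rw [show (fun n => J^[n] β) = Subtype.val ∘ x from funext fun n => (hxβ n).symm, Set.range_comp]
  exact hfin.image _
end
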